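/- The partial Cayley transform Φ_* is a biholomorphic map from 𝐃_{n,m} onto 𝐇_{n,m}: for every (W,η) ∈ 𝐃_{n,m} the matrix I_n − W is invertible and Φ_*(W,η) ∈ 𝐇_{n,m}; Φ_* is holomorphic, bijective onto 𝐇_{n,m}, and its inverse is holomorphic. -/

import Mathlib

noncomputable section
open Matrix Complex

abbrev Mat (a b : ℕ) (R : Type) := Matrix (Fin a) (Fin b) R

def Jn (n : ℕ) : Matrix (Fin n ⊕ Fin n) (Fin n ⊕ Fin n) ℝ :=
  Matrix.fromBlocks 0 1 (-1) 0

def Sp (n : ℕ) : Set (Matrix (Fin n ⊕ Fin n) (Fin n ⊕ Fin n) ℝ) :=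
  {M | Mᵀ * Jn n * M = Jn n}

def blkA {n : ℕ} (M : Matrix (Fin n ⊕ Fin n) (Fin n ⊕ Fin n) ℝ) : Mat n n ℂ :=
  (Matrix.toBlocks₁₁ M).map (Complex.ofReal)
def blkB {n : ℕ} (M : Matrix (Fin n ⊕ Fin n) (Fin n ⊕ Fin n) ℝ) : Mat n n ℂ :=
  (Matrix.toBlocks₁₂ M).map (Complex.ofReal)
def blkC {n : ℕ} (M : Matrix (Fin n ⊕ Fin n) (Fin n ⊕ Fin n) ℝ) : Mat n n ℂ :=
  (Matrix.toBlocks₂₁ M).map (Complex.ofReal)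
def blkD {n : ℕ} (M : Matrix (Fin n ⊕ Fin n) (Fin n ⊕ Fin n) ℝ) : Mat n n ℂ :=
  (Matrix.toBlocks₂₂ M).map (Complex.ofReal)

def SiegelH (n : ℕ) : Set (Mat n n ℂ) :=
  {Ω | Ω.IsSymm ∧ (Ω.map Complex.im).PosDef}

def spAct {n : ℕ} (M : Matrix (Fin n ⊕ Fin n) (Fin n ⊕ Fin n) ℝ) (Ω : Mat n n ℂ) : Mat n n ℂ :=
  (blkA M * Ω + blkB M) * (blkC M * Ω + blkD M)⁻¹

/-- An element of the Jacobi group G^J = Sp(n,ℝ) ⋉ H_ℝ^(n,m):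
a symplectic part together with (λ, μ, κ). -/
abbrev GJ (n m : ℕ) :=
  Matrix (Fin n ⊕ Fin n) (Fin n ⊕ Fin n) ℝ × Mat m n ℝ × Mat m n ℝ × Mat m m ℝ

/-- The Siegel-Jacobi space 𝐇_{n,m} = 𝐇ₙ × ℂ^(m,n). -/
def HJ (n m : ℕ) : Set (Mat n n ℂ × Mat m n ℂ) := {p | p.1 ∈ SiegelH n}

/-- The action of G^J on 𝐇_{n,m}:
(M,(λ,μ,κ))·(Ω,Z) = (M∘Ω, (Z+λΩ+μ)(CΩ+D)⁻¹). -/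
def jAct {n m : ℕ} (g : GJ n m) (p : Mat n n ℂ × Mat m n ℂ) :
    Mat n n ℂ × Mat m n ℂ :=
  (spAct g.1 p.1,
    (p.2 + g.2.1.map Complex.ofReal * p.1 + g.2.2.1.map Complex.ofReal) *
      (blkC g.1 * p.1 + blkD g.1)⁻¹)
open scoped ComplexOrder

/-- Entrywise complex conjugate of a matrix. -/
def conjM {a b : ℕ} (W : Mat a b ℂ) : Mat a b ℂ := W.map (starRingEnd ℂ)

/-- The generalized unit disk 𝐃ₙ: symmetric W with Iₙ − WW̄ positive definite. -/
def SiegelD (n : ℕ) : Set (Mat n n ℂ) :=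
  {W | W.IsSymm ∧ (1 - W * conjM W).PosDef}

/-- The Siegel-Jacobi disk 𝐃_{n,m} = 𝐃ₙ × ℂ^(m,n). -/
def DJ (n m : ℕ) : Set (Mat n n ℂ × Mat m n ℂ) := {p | p.1 ∈ SiegelD n}

/-- The partial Cayley transform
Φ_*(W,η) = (i(Iₙ+W)(Iₙ−W)⁻¹, 2iη(Iₙ−W)⁻¹). -/
def cayley {n m : ℕ} (p : Mat n n ℂ × Mat m n ℂ) : Mat n n ℂ × Mat m n ℂ :=
  (Complex.I • ((1 + p.1) * (1 - p.1)⁻¹), (2 * Complex.I) • (p.2 * (1 - p.1)⁻¹))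

attribute [local instance] Matrix.normedAddCommGroup Matrix.normedSpace

/-!
Write T = 1 - W and S = Ω + iI. The transform and its inverse
Ψ(Ω, Z) = ((Ω + iI)⁻¹(Ω - iI), Z(Ω + iI)⁻¹) are both governed by the relation T S = 2iI
(`IsCayleyPair W Ω`): it holds for (W, Φ_*(W)) once T is invertible and for (Ψ(Ω), Ω) once S is,
and it recovers each of W, Ω from the other. Under it W is symmetric iff Ω is, and
2i(1 - W Wᴴ) = T (Ω - Ωᴴ) Tᴴ; since W̄ = Wᴴ and Ω - Ωᴴ = 2i Im Ω for symmetric matrices,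
1 - W W̄ > 0 and Im Ω > 0 are congruent conditions. T is invertible on 𝐃ₙ because Wᴴv = v forces
vᴴ(1 - W Wᴴ)v = 0, and S on 𝐇ₙ because Im Ω > 0. Holomorphy is checked entrywise, a matrix
inverse being the adjugate divided by the determinant.
-/

namespace Matrix

section Differentiability

variable {𝕜 E : Type*} [NontriviallyNormedField 𝕜] [NormedAddCommGroup E] [NormedSpace 𝕜 E]
  {s : Set E} {l m n : Type*}

theorem differentiableOn_iff_entries [Fintype n] {f : E → Matrix m n 𝕜} :
    DifferentiableOn 𝕜 f s ↔ ∀ i j, DifferentiableOn 𝕜 (fun x => f x i j) s :=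
  differentiableOn_pi.trans (forall_congr' fun _ => differentiableOn_pi)

theorem _root_.DifferentiableOn.matrix_mul [Fintype m] [Fintype n] {f : E → Matrix l m 𝕜}
    {g : E → Matrix m n 𝕜} (hf : DifferentiableOn 𝕜 f s) (hg : DifferentiableOn 𝕜 g s) :
    DifferentiableOn 𝕜 (fun x => f x * g x) s := by
  rw [differentiableOn_iff_entries] at *
  intro i j
  simp only [mul_apply]
  exact .fun_sum fun k _ => (hf i k).mul (hg k j)

theorem _root_.DifferentiableOn.matrix_det [Fintype n] [DecidableEq n] {f : E → Matrix n n 𝕜}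
    (hf : DifferentiableOn 𝕜 f s) : DifferentiableOn 𝕜 (fun x => (f x).det) s := by
  rw [differentiableOn_iff_entries] at hf
  simp only [det_apply']
  refine .fun_sum fun σ _ => .const_mul (fun x hx => ?_) _
  exact (HasFDerivWithinAt.finsetProd fun i _ =>
    (hf (σ i) i x hx).hasFDerivWithinAt).differentiableWithinAt

theorem _root_.DifferentiableOn.matrix_adjugate [Fintype n] [DecidableEq n]
    {f : E → Matrix n n 𝕜} (hf : DifferentiableOn 𝕜 f s) :
    DifferentiableOn 𝕜 (fun x => (f x).adjugate) s := by
  refine differentiableOn_iff_entries.2 fun i j => ?_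
  simp only [adjugate_apply]
  refine DifferentiableOn.matrix_det (differentiableOn_iff_entries.2 fun i' j' => ?_)
  rw [differentiableOn_iff_entries] at hf
  rcases eq_or_ne i' j with rfl | h
  · simpa only [updateRow_self] using differentiableOn_const _
  · simpa only [updateRow_ne h] using hf i' j'

theorem _root_.DifferentiableOn.matrix_inv [Fintype n] [DecidableEq n] {f : E → Matrix n n 𝕜}
    (hf : DifferentiableOn 𝕜 f s) (h : ∀ x ∈ s, IsUnit (f x)) :
    DifferentiableOn 𝕜 (fun x => (f x)⁻¹) s := by
  simp only [inv_def, Ring.inverse_eq_inv']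
  exact (hf.matrix_det.inv fun x hx => ((isUnit_iff_isUnit_det _).1 (h x hx)).ne_zero).smul
    hf.matrix_adjugate

end Differentiability

section ComplexMatrix

variable {ι : Type*}

theorem conjTranspose_map_ofReal {κ : Type*} (S : Matrix κ ι ℝ) :
    (S.map Complex.ofReal)ᴴ = Sᵀ.map Complex.ofReal := by
  ext; simp

open scoped MatrixOrder in
theorem posDef_map_ofReal_iff [Fintype ι] [DecidableEq ι] {S : Matrix ι ι ℝ} :
    (S.map Complex.ofReal).PosDef ↔ S.PosDef := by
  constructor
  · intro h
    rw [posDef_iff_dotProduct_mulVec] at h ⊢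
    refine ⟨map_injective ofReal_injective ?_, fun x hx => ?_⟩
    · simpa [conjTranspose_map_ofReal] using h.1.eq
    · have := h.2 (x := fun i => (x i : ℂ)) (by simpa [funext_iff] using hx)
      simp only [dotProduct, mulVec, map_apply, Pi.star_apply, Complex.star_def,
        Complex.conj_ofReal] at this
      exact_mod_cast this
  · intro h
    obtain ⟨B, rfl⟩ := CStarAlgebra.nonneg_iff_eq_star_mul_self.mp h.posSemidef.nonneg
    have hsemi : ((star B * B).map Complex.ofReal).PosSemidef := by
      have := posSemidef_conjTranspose_mul_self (B.map Complex.ofReal)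
      rw [conjTranspose_map_ofReal] at this
      convert this using 1
      exact Matrix.map_mul (f := ofRealHom)
    exact hsemi.posDef_iff_isUnit.mpr (h.isUnit.map (ofRealHom.mapMatrix (m := ι)))

theorem sub_conjTranspose_of_isSymm {Ω : Matrix ι ι ℂ} (h : Ω.IsSymm) :
    Ω - Ωᴴ = (2 * I) • (Ω.map Complex.im).map Complex.ofReal := by
  ext i j
  rw [sub_apply, conjTranspose_apply, h.apply i j, Complex.star_def, Complex.sub_conj]
  simp only [smul_apply, map_apply, smul_eq_mul]
  push_cast
  ring

variable [Fintype ι] [DecidableEq ι]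

theorem isUnit_of_mulVec_eq_zero {R : Type*} [Field R] {A : Matrix ι ι R}
    (h : ∀ v, A *ᵥ v = 0 → v = 0) : IsUnit A :=
  mulVec_injective_iff_isUnit.mp fun v w hvw =>
    sub_eq_zero.mp (h _ (by rw [mulVec_sub, hvw, sub_self]))

variable {𝕜 : Type*} [RCLike 𝕜]

theorem isUnit_one_sub_of_posDef {A : Matrix ι ι 𝕜} (h : (1 - A * Aᴴ).PosDef) :
    IsUnit (1 - A) := by
  rw [← isUnit_conjTranspose, conjTranspose_sub, conjTranspose_one]
  refine isUnit_of_mulVec_eq_zero fun v hv => by_contra fun hv0 => ?_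
  have hAv : Aᴴ *ᵥ v = v := by rwa [sub_mulVec, one_mulVec, sub_eq_zero, eq_comm] at hv
  have hpos := h.dotProduct_mulVec_pos hv0
  rw [sub_mulVec, one_mulVec, ← mulVec_mulVec, dotProduct_sub, dotProduct_mulVec (star v),
    ← conjTranspose_conjTranspose A, ← star_mulVec, conjTranspose_conjTranspose, hAv,
    sub_self] at hpos
  exact hpos.false

theorem isUnit_of_sub_conjTranspose_eq_smul {X P : Matrix ι ι 𝕜} {c : 𝕜} (hc : c ≠ 0)
    (hP : P.PosDef) (h : X - Xᴴ = c • P) : IsUnit X := by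
  refine isUnit_of_mulVec_eq_zero fun v hv => by_contra fun hv0 => ?_
  have hform : star v ⬝ᵥ ((X - Xᴴ) *ᵥ v) = 0 := by
    rw [sub_mulVec, dotProduct_sub, dotProduct_mulVec (star v) Xᴴ, ← star_mulVec, hv]
    simp
  rw [h, smul_mulVec, dotProduct_smul, smul_eq_mul, mul_eq_zero] at hform
  exact hform.elim hc (hP.dotProduct_mulVec_pos hv0).ne'

end ComplexMatrix

end Matrix

section CayleyPair

variable {ι : Type*} [Fintype ι] [DecidableEq ι]

def IsCayleyPair (W Ω : Matrix ι ι ℂ) : Prop :=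
  (1 - W) * (Ω + I • 1) = (2 * I) • 1

theorem two_mul_I_ne_zero : (2 * I : ℂ) ≠ 0 := by simp

theorem isCayleyPair_of_isUnit_one_sub {W : Matrix ι ι ℂ} (hW : IsUnit (1 - W)) :
    IsCayleyPair W (I • ((1 + W) * (1 - W)⁻¹)) := by
  have hinv : (1 - W) * (1 - W)⁻¹ = 1 := mul_nonsing_inv _ ((isUnit_iff_isUnit_det _).1 hW)
  have hcomm : (1 - W) * (1 + W) = (1 + W) * (1 - W) := by noncomm_ring
  rw [IsCayleyPair, mul_add, Matrix.mul_smul, Matrix.mul_smul, ← mul_assoc, hcomm, mul_assoc,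
    hinv, mul_one, mul_one]
  module

theorem isCayleyPair_of_isUnit_add {Ω : Matrix ι ι ℂ} (hΩ : IsUnit (Ω + I • 1)) :
    IsCayleyPair ((Ω + I • 1)⁻¹ * (Ω - I • 1)) Ω := by
  have hinv : (Ω + I • 1)⁻¹ * (Ω + I • 1) = 1 :=
    nonsing_inv_mul _ ((isUnit_iff_isUnit_det _).1 hΩ)
  have key : 1 - (Ω + I • 1)⁻¹ * (Ω - I • 1) = (2 * I) • (Ω + I • 1)⁻¹ := by
    nth_rw 1 [← hinv]
    rw [← mul_sub, show Ω + I • 1 - (Ω - I • 1) = (2 * I) • 1 by module, Matrix.mul_smul,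
      mul_one]
  rw [IsCayleyPair, key, Matrix.smul_mul, hinv]

namespace IsCayleyPair

variable {W Ω : Matrix ι ι ℂ}

theorem one_sub_mul_add (h : IsCayleyPair W Ω) : (1 - W) * (Ω + I • 1) = (2 * I) • 1 := h

theorem add_mul_one_sub (h : IsCayleyPair W Ω) : (Ω + I • 1) * (1 - W) = (2 * I) • 1 := by
  have h' : ((2 * I)⁻¹ • (1 - W)) * (Ω + I • 1) = 1 := by
    rw [Matrix.smul_mul, h, smul_smul, inv_mul_cancel₀ two_mul_I_ne_zero, one_smul]
  rw [← mul_eq_one_comm, Matrix.mul_smul] at h'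
  calc (Ω + I • 1) * (1 - W) = (2 * I) • ((2 * I)⁻¹ • ((Ω + I • 1) * (1 - W))) := by
        rw [smul_smul, mul_inv_cancel₀ two_mul_I_ne_zero, one_smul]
    _ = (2 * I) • 1 := by rw [h']

theorem inv_one_sub (h : IsCayleyPair W Ω) : (1 - W)⁻¹ = (2 * I)⁻¹ • (Ω + I • 1) := by
  apply inv_eq_left_inv
  rw [Matrix.smul_mul, h.add_mul_one_sub, smul_smul, inv_mul_cancel₀ two_mul_I_ne_zero, one_smul]

theorem inv_add (h : IsCayleyPair W Ω) : (Ω + I • 1)⁻¹ = (2 * I)⁻¹ • (1 - W) := by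
  apply inv_eq_left_inv
  rw [Matrix.smul_mul, h, smul_smul, inv_mul_cancel₀ two_mul_I_ne_zero, one_smul]

theorem smul_one_add_mul_inv_one_sub (h : IsCayleyPair W Ω) :
    I • ((1 + W) * (1 - W)⁻¹) = Ω := by
  have key :
      (1 + W) * (Ω + I • 1) = (2 : ℂ) • (Ω + I • 1) - (1 - W) * (Ω + I • 1) := by
    simp only [add_mul, sub_mul, one_mul]
    module
  rw [h.inv_one_sub, Matrix.mul_smul, key, h]
  match_scalars <;> simp [field]

theorem inv_add_mul_sub (h : IsCayleyPair W Ω) : (Ω + I • 1)⁻¹ * (Ω - I • 1) = W := by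
  have key : (1 - W) * (Ω - I • 1) = (1 - W) * (Ω + I • 1) - (2 * I) • (1 - W) := by
    simp only [mul_sub, mul_add, Matrix.mul_smul, mul_one]
    module
  rw [h.inv_add, Matrix.smul_mul, key, h]
  match_scalars <;> simp [field]

theorem smul_mul_inv_one_sub_mul_inv_add {κ : Type*} (h : IsCayleyPair W Ω)
    (η : Matrix κ ι ℂ) : (2 * I) • (η * (1 - W)⁻¹) * (Ω + I • 1)⁻¹ = η := by
  rw [h.inv_one_sub, h.inv_add]
  simp only [Matrix.smul_mul, Matrix.mul_smul, smul_smul, Matrix.mul_assoc, h.add_mul_one_sub,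
    Matrix.mul_one]
  match_scalars
  simp [field]

theorem smul_mul_inv_add_mul_inv_one_sub {κ : Type*} (h : IsCayleyPair W Ω)
    (Z : Matrix κ ι ℂ) : (2 * I) • (Z * (Ω + I • 1)⁻¹ * (1 - W)⁻¹) = Z := by
  rw [h.inv_one_sub, h.inv_add]
  simp only [Matrix.smul_mul, Matrix.mul_smul, smul_smul, Matrix.mul_assoc, h.one_sub_mul_add,
    Matrix.mul_one]
  match_scalars
  simp [field]

theorem isUnit_one_sub (h : IsCayleyPair W Ω) : IsUnit (1 - W) :=
  .of_mul_eq_one ((2 * I)⁻¹ • (Ω + I • 1)) <| by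
    rw [Matrix.mul_smul, h, smul_smul, inv_mul_cancel₀ two_mul_I_ne_zero, one_smul]

theorem isSymm_iff (h : IsCayleyPair W Ω) : W.IsSymm ↔ Ω.IsSymm := by
  have hT : 1 - W = (2 * I) • (Ω + I • 1)⁻¹ := by
    rw [h.inv_add, smul_smul, mul_inv_cancel₀ two_mul_I_ne_zero, one_smul]
  have hS : Ω + I • 1 = (2 * I) • (1 - W)⁻¹ := by
    rw [h.inv_one_sub, smul_smul, mul_inv_cancel₀ two_mul_I_ne_zero, one_smul]
  constructor
  · intro hW
    have hS' : (Ω + I • 1).IsSymm := hS ▸ ((isSymm_one.sub hW).inv.smul _)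
    simpa using hS'.sub (isSymm_one.smul I)
  · intro hΩ
    have hT' : (1 - W).IsSymm := hT ▸ ((hΩ.add (isSymm_one.smul I)).inv.smul _)
    simpa using isSymm_one.sub hT'

theorem two_mul_I_smul_one_sub_mul_conjTranspose (h : IsCayleyPair W Ω) :
    (2 * I) • (1 - W * Wᴴ) = (1 - W) * (Ω - Ωᴴ) * (1 - W)ᴴ := by
  have hT : (1 - W) * Ω = (2 * I) • 1 - I • (1 - W) := by
    rw [← h, mul_add, Matrix.mul_smul, mul_one, add_sub_cancel_right]
  have hTH : Ωᴴ * (1 - W)ᴴ = -(2 * I) • 1 + I • (1 - W)ᴴ := by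
    rw [← conjTranspose_mul, hT]
    simp
  rw [mul_sub, sub_mul, hT, Matrix.mul_assoc, hTH]
  simp only [sub_mul, mul_add, Matrix.smul_mul, Matrix.mul_smul, one_mul, mul_one,
    conjTranspose_sub, conjTranspose_one, mul_sub, sub_mul]
  module

theorem posDef_iff (h : IsCayleyPair W Ω) (hΩ : Ω.IsSymm) :
    (1 - W * Wᴴ).PosDef ↔ (Ω.map im).PosDef := by
  have key : 1 - W * Wᴴ = (1 - W) * (Ω.map im).map ofReal * (1 - W)ᴴ := by
    apply smul_right_injective _ two_mul_I_ne_zero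
    dsimp only
    rw [h.two_mul_I_smul_one_sub_mul_conjTranspose, sub_conjTranspose_of_isSymm hΩ,
      Matrix.mul_smul, Matrix.smul_mul]
  rw [key, ← star_eq_conjTranspose, h.isUnit_one_sub.posDef_star_right_conjugate_iff,
    posDef_map_ofReal_iff]

end IsCayleyPair

end CayleyPair

section SiegelJacobi

variable {n m : ℕ}

theorem conjM_eq_conjTranspose {W : Mat n n ℂ} (h : W.IsSymm) : conjM W = Wᴴ := by
  ext i j
  rw [conjM, map_apply, conjTranspose_apply, h.apply i j, Complex.star_def]

theorem mem_siegelD_iff {W : Mat n n ℂ} :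
    W ∈ SiegelD n ↔ W.IsSymm ∧ (1 - W * Wᴴ).PosDef :=
  and_congr_right fun h => by rw [conjM_eq_conjTranspose h]

theorem isUnit_one_sub_of_mem_siegelD {W : Mat n n ℂ} (hW : W ∈ SiegelD n) : IsUnit (1 - W) :=
  isUnit_one_sub_of_posDef (mem_siegelD_iff.1 hW).2

theorem isUnit_add_I_smul_of_mem_siegelH {Ω : Mat n n ℂ} (hΩ : Ω ∈ SiegelH n) :
    IsUnit (Ω + I • 1) := by
  refine isUnit_of_sub_conjTranspose_eq_smul two_mul_I_ne_zero
    ((posDef_map_ofReal_iff.2 hΩ.2).add .one) ?_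
  rw [conjTranspose_add, conjTranspose_smul, conjTranspose_one, add_sub_add_comm,
    sub_conjTranspose_of_isSymm hΩ.1, smul_add, Complex.star_def, Complex.conj_I]
  module

def cayleyInv (q : Mat n n ℂ × Mat m n ℂ) : Mat n n ℂ × Mat m n ℂ :=
  ((q.1 + I • 1)⁻¹ * (q.1 - I • 1), q.2 * (q.1 + I • 1)⁻¹)

theorem mapsTo_cayley : Set.MapsTo (cayley (n := n) (m := m)) (DJ n m) (HJ n m) := by
  intro p hp
  obtain ⟨hsymm, hpos⟩ := mem_siegelD_iff.1 hp
  have h := isCayleyPair_of_isUnit_one_sub (isUnit_one_sub_of_mem_siegelD hp)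
  have hΩ := h.isSymm_iff.1 hsymm
  exact ⟨hΩ, (h.posDef_iff hΩ).1 hpos⟩

theorem mapsTo_cayleyInv : Set.MapsTo (cayleyInv (n := n) (m := m)) (HJ n m) (DJ n m) := by
  intro q hq
  have h := isCayleyPair_of_isUnit_add (isUnit_add_I_smul_of_mem_siegelH hq)
  exact mem_siegelD_iff.2 ⟨h.isSymm_iff.2 hq.1, (h.posDef_iff hq.1).2 hq.2⟩

theorem invOn_cayleyInv_cayley :
    Set.InvOn (cayleyInv (n := n) (m := m)) cayley (DJ n m) (HJ n m) := by
  constructor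
  · intro p hp
    have h := isCayleyPair_of_isUnit_one_sub (isUnit_one_sub_of_mem_siegelD hp)
    exact Prod.ext h.inv_add_mul_sub (h.smul_mul_inv_one_sub_mul_inv_add p.2)
  · intro q hq
    have h := isCayleyPair_of_isUnit_add (isUnit_add_I_smul_of_mem_siegelH hq)
    exact Prod.ext h.smul_one_add_mul_inv_one_sub (h.smul_mul_inv_add_mul_inv_one_sub q.2)

theorem differentiableOn_cayley :
    DifferentiableOn ℂ (cayley (n := n) (m := m)) (DJ n m) := by
  have hinv :
      DifferentiableOn ℂ (fun p : Mat n n ℂ × Mat m n ℂ => (1 - p.1)⁻¹) (DJ n m) :=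
    (differentiableOn_const _ |>.sub differentiableOn_fst).matrix_inv
      fun _ hp => isUnit_one_sub_of_mem_siegelD hp
  exact ((((differentiableOn_const _).add differentiableOn_fst).matrix_mul hinv).const_smul
    I).prodMk ((differentiableOn_snd.matrix_mul hinv).const_smul (2 * I))

theorem differentiableOn_cayleyInv :
    DifferentiableOn ℂ (cayleyInv (n := n) (m := m)) (HJ n m) := by
  have hinv :
      DifferentiableOn ℂ (fun q : Mat n n ℂ × Mat m n ℂ => (q.1 + I • 1)⁻¹) (HJ n m) :=
    (differentiableOn_fst.add (differentiableOn_const _)).matrix_inv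
      fun _ hq => isUnit_add_I_smul_of_mem_siegelH hq
  exact (hinv.matrix_mul (differentiableOn_fst.sub (differentiableOn_const _))).prodMk
    (differentiableOn_snd.matrix_mul hinv)

end SiegelJacobi

theorem partial_cayley_transform_biholomorphic (n m : ℕ) :
    (∀ p ∈ DJ n m, IsUnit ((1 : Mat n n ℂ) - p.1) ∧ cayley p ∈ HJ n m)
    ∧ DifferentiableOn ℂ (cayley (n := n) (m := m)) (DJ n m)
    ∧ Set.BijOn (cayley (n := n) (m := m)) (DJ n m) (HJ n m)
    ∧ ∃ Ψ : Mat n n ℂ × Mat m n ℂ → Mat n n ℂ × Mat m n ℂ,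
        DifferentiableOn ℂ Ψ (HJ n m) ∧
        Set.InvOn Ψ (cayley (n := n) (m := m)) (DJ n m) (HJ n m) :=
  ⟨fun _ hp => ⟨isUnit_one_sub_of_mem_siegelD hp, mapsTo_cayley hp⟩, differentiableOn_cayley,
    invOn_cayleyInv_cayley.bijOn mapsTo_cayley mapsTo_cayleyInv,
    cayleyInv, differentiableOn_cayleyInv, invOn_cayleyInv_cayley⟩
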